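/- arXiv:2402.04219 — 3 statements merged into one kernel-verified Lean document; each statement's English description precedes it below -/
import Mathlib

section
/- Let α, β ∈ ℤ^ℓ and M(i,j) = (α_i - i) - (β_j - j). Suppose that for every k with 1 ≤ k ≤ ℓ, the set of rows i for which M(i,j) < 0 for at least ℓ - k + 1 columns j has cardinality at most k - 1. Then there exists a permutation σ of {1,...,ℓ} such that M(i, σ(i)) ≥ 0 for all i. -/
theorem stmt_6 (ℓ : ℕ) (α β : Fin ℓ → ℤ) (M : Fin ℓ → Fin ℓ → ℤ)
    (hM : ∀ i j, M i j = (α i - ((i : ℕ) + 1)) - (β j - ((j : ℕ) + 1)))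
    (hcond : ∀ k : ℕ, 1 ≤ k → k ≤ ℓ →
      (Finset.univ.filter (fun i : Fin ℓ =>
        ℓ - k + 1 ≤ (Finset.univ.filter (fun j => M i j < 0)).card)).card ≤ k - 1) :
    ∃ σ : Equiv.Perm (Fin ℓ), ∀ i, 0 ≤ M i (σ i) := by
  set r : Fin ℓ → Finset (Fin ℓ) := fun i => Finset.univ.filter (fun j => 0 ≤ M i j) with hr
  have hall : ∀ S : Finset (Fin ℓ), S.card ≤ (S.biUnion r).card := by
    intro S
    rcases S.eq_empty_or_nonempty with h | h
    · simp [h]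
    -- find i₀ ∈ S with S.card ≤ (r i₀).card
    by_cases hbig : ∃ i₀ ∈ S, S.card ≤ (r i₀).card
    · obtain ⟨i₀, hi₀, hc⟩ := hbig
      exact hc.trans (Finset.card_le_card (fun j hj => Finset.mem_biUnion.2 ⟨i₀, hi₀, hj⟩))
    · exfalso
      push_neg at hbig
      have hS1 : 1 ≤ S.card := Finset.Nonempty.card_pos h
      have hSℓ : S.card ≤ ℓ := by
        simpa using Finset.card_le_card (Finset.subset_univ S)
      have hsub : S ⊆ Finset.univ.filter (fun i : Fin ℓ =>
          ℓ - S.card + 1 ≤ (Finset.univ.filter (fun j => M i j < 0)).card) := by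
        intro i hi
        simp only [Finset.mem_filter, Finset.mem_univ, true_and]
        have hri : (r i).card < S.card := hbig i hi
        have hcompl : (Finset.univ.filter (fun j => M i j < 0)).card
            = ℓ - (r i).card := by
          have : Finset.univ.filter (fun j => M i j < 0)
              = (Finset.univ.filter (fun j : Fin ℓ => 0 ≤ M i j))ᶜ := by
            ext j; simp [not_le]
          rw [this, Finset.card_compl, hr]
          simp
        rw [hcompl]
        omega
      have := (Finset.card_le_card hsub).trans (hcond S.card hS1 hSℓ)
      omega
  obtain ⟨f, hinj, hf⟩ := (Finset.all_card_le_biUnion_card_iff_existsInjective' r).1 hall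
  refine ⟨Equiv.ofBijective f ((Finite.injective_iff_bijective).1 hinj), fun i => ?_⟩
  have := hf i
  simp only [hr, Finset.mem_filter] at this
  exact this.2
end

section
/- Let α, β ∈ ℤ^ℓ and M(i,j) = (α_i - i) - (β_j - j). The following are equivalent: (1) there exists a permutation σ of {1,...,ℓ} with M(i, σ(i)) ≥ 0 for all i; (2) for every k with 1 ≤ k ≤ ℓ, the number of rows i having at least ℓ - k + 1 columns j with M(i,j) < 0 is at most k - 1. -/
theorem stmt_7 (ℓ : ℕ) (α β : Fin ℓ → ℤ) (M : Fin ℓ → Fin ℓ → ℤ)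
    (hM : ∀ i j, M i j = (α i - ((i : ℕ) + 1)) - (β j - ((j : ℕ) + 1))) :
    (∃ σ : Equiv.Perm (Fin ℓ), ∀ i, 0 ≤ M i (σ i)) ↔
      (∀ k : ℕ, 1 ≤ k → k ≤ ℓ →
        (Finset.univ.filter (fun i : Fin ℓ =>
          ℓ - k + 1 ≤ (Finset.univ.filter (fun j => M i j < 0)).card)).card ≤ k - 1) := by
  classical
  set a : Fin ℓ → ℤ := fun i => α i - ((i : ℕ) + 1) with ha
  set A : Fin ℓ → Finset (Fin ℓ) := fun i => Finset.univ.filter (fun j => 0 ≤ M i j) with hA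
  -- nestedness
  have hnest : ∀ i i' : Fin ℓ, a i ≤ a i' → A i ⊆ A i' := by
    intro i i' hle j hj
    simp only [hA, Finset.mem_filter, Finset.mem_univ, true_and, hM] at hj ⊢
    simp only [ha] at hle
    linarith
  have hAcardle : ∀ i, (A i).card ≤ ℓ := by
    intro i
    simpa using Finset.card_le_univ (A i)
  -- complement card
  have hcompl : ∀ i, (Finset.univ.filter (fun j => M i j < 0)).card + (A i).card = ℓ := by
    intro i
    have := Finset.card_filter_add_card_filter_not
      (s := (Finset.univ : Finset (Fin ℓ))) (p := fun j => M i j < 0)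
    simp only [Finset.card_univ, Fintype.card_fin] at this
    have heq : A i = Finset.univ.filter (fun j => ¬ M i j < 0) := by
      simp only [hA]
      apply Finset.filter_congr
      intro j _
      simp [not_lt]
    rw [heq]
    exact this
  constructor
  · rintro ⟨σ, hσ⟩ k hk1 hk2
    by_contra hcon
    push_neg at hcon
    set S := Finset.univ.filter (fun i : Fin ℓ =>
      ℓ - k + 1 ≤ (Finset.univ.filter (fun j => M i j < 0)).card) with hS
    have hSne : S.Nonempty := Finset.card_pos.mp (by omega)
    obtain ⟨i₀, hi₀S, hmax⟩ := Finset.exists_max_image S a hSne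
    have hsub : ∀ i ∈ S, (A i).card ≤ k - 1 := by
      intro i hi
      simp only [hS, Finset.mem_filter] at hi
      have := hcompl i
      have := hAcardle i
      omega
    have hcard : S.card ≤ (A i₀).card := by
      apply Finset.card_le_card_of_injOn σ
      · intro i hi
        exact hnest i i₀ (hmax i hi) (by
          simp only [hA, Finset.mem_filter, Finset.mem_univ, true_and]
          exact hσ i)
      · exact fun x _ y _ h => σ.injective h
    have := hsub i₀ hi₀S
    omega
  · intro h
    have hall : ∀ s : Finset (Fin ℓ), s.card ≤ (s.biUnion A).card := by
      intro s
      rcases s.eq_empty_or_nonempty with rfl | hs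
      · simp
      obtain ⟨i₀, hi₀, hmax⟩ := Finset.exists_max_image s a hs
      have hsubU : A i₀ ⊆ s.biUnion A := fun j hj =>
        Finset.mem_biUnion.mpr ⟨i₀, hi₀, hj⟩
      have hU : (A i₀).card ≤ (s.biUnion A).card := Finset.card_le_card hsubU
      set m := (A i₀).card with hm
      by_cases hml : ℓ ≤ m
      · have : s.card ≤ ℓ := by simpa using Finset.card_le_univ s
        omega
      · push_neg at hml
        have hk := h (m + 1) (by omega) (by omega)
        have hsub : s ⊆ Finset.univ.filter (fun i : Fin ℓ =>
            ℓ - (m + 1) + 1 ≤ (Finset.univ.filter (fun j => M i j < 0)).card) := by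
          intro i hi
          simp only [Finset.mem_filter, Finset.mem_univ, true_and]
          have h1 : (A i).card ≤ m := by
            have := Finset.card_le_card (hnest i i₀ (hmax i hi))
            omega
          have := hcompl i
          omega
        have := Finset.card_le_card hsub
        omega
    obtain ⟨f, hfinj, hf⟩ :=
      (Finset.all_card_le_biUnion_card_iff_exists_injective A).mp hall
    refine ⟨Equiv.ofBijective f (Finite.injective_iff_bijective.mp hfinj), fun i => ?_⟩
    have := hf i
    simp only [hA, Finset.mem_filter, Finset.mem_univ, true_and] at this
    exact this
end

section
/- Let α ∈ ℤ^ℓ and λ ∈ ℤ^ℓ weakly decreasing, M(i,j) = (α_i - i) - (λ_j - j). Suppose: (a) for every nonempty set S of rows, some row in S has at least |S| nonnegative entries; and (b) whenever two rows i ≠ j satisfy α_i - i = α_j - j, no entry of these rows is 0, i.e., M(i,c) ≠ 0 for all c. Then there exists a permutation σ with M(i,σ(i)) ≥ 0 for all i such that every zero entry of M is selected: whenever M(r,t) = 0 we have σ(r) = t. -/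
theorem stmt_19 (ℓ : ℕ) (α lam : Fin ℓ → ℤ) (hlam : Antitone lam)
    (M : Fin ℓ → Fin ℓ → ℤ)
    (hM : ∀ i j, M i j = (α i - ((i : ℕ) + 1)) - (lam j - ((j : ℕ) + 1)))
    (ha : ∀ S : Finset (Fin ℓ), S.Nonempty →
      ∃ r ∈ S, S.card ≤ (Finset.univ.filter (fun j => 0 ≤ M r j)).card)
    (hb : ∀ i j : Fin ℓ, i ≠ j →
      α i - ((i : ℕ) + 1) = α j - ((j : ℕ) + 1) →
      ∀ c, M i c ≠ 0 ∧ M j c ≠ 0) :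
    ∃ σ : Equiv.Perm (Fin ℓ), (∀ i, 0 ≤ M i (σ i)) ∧
      (∀ r t, M r t = 0 → σ r = t) := by
  classical
  set a : Fin ℓ → ℤ := fun i => α i - ((i : ℕ) + 1) with hadef
  set b : Fin ℓ → ℤ := fun j => lam j - ((j : ℕ) + 1) with hbdef
  have hMab : ∀ i j, M i j = a i - b j := hM
  -- b is strictly decreasing
  have hbs : ∀ {j k : Fin ℓ}, j < k → b k < b j := by
    intro j k hjk
    have h1 : lam k ≤ lam j := hlam hjk.le
    have h2 : ((j : ℕ) : ℤ) < ((k : ℕ) : ℤ) := by exact_mod_cast hjk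
    simp only [hbdef]
    linarith
  have hbinj : Function.Injective b := by
    intro j k h
    rcases lt_trichotomy j k with hc | hc | hc
    · exact absurd h (hbs hc).ne'
    · exact hc
    · exact absurd h (hbs hc).ne
  have hmem : ∀ i j, 0 ≤ M i j ↔ b j ≤ a i := by
    intro i j
    rw [hMab]
    constructor <;> intro h <;> linarith
  -- zero rows and their unique zero columns
  set Zr : Fin ℓ → Prop := fun i => ∃ j, M i j = 0 with hZrdef
  set z : Fin ℓ → Fin ℓ := fun i =>
    if h : Zr i then h.choose else i with hzdef
  have hz : ∀ i, Zr i → M i (z i) = 0 := by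
    intro i h
    simp only [hzdef, dif_pos h]
    exact h.choose_spec
  have hzab : ∀ i, Zr i → b (z i) = a i := by
    intro i h
    have := hz i h
    rw [hMab] at this; linarith
  have hzuniq : ∀ i j, M i j = 0 → j = z i := by
    intro i j hij
    have hZ : Zr i := ⟨j, hij⟩
    have h1 : b j = a i := by rw [hMab] at hij; linarith
    exact hbinj (h1.trans (hzab i hZ).symm)
  have hzinj : ∀ r r', Zr r → Zr r' → z r = z r' → r = r' := by
    intro r r' hr hr' hzz
    by_contra hne
    have h1 : a r = a r' := by
      rw [← hzab r hr, ← hzab r' hr', hzz]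
    exact (hb r r' hne h1 (z r)).1 (hz r hr)
  -- nonnegative columns of a row
  set N0 : Fin ℓ → Finset (Fin ℓ) :=
    fun i => Finset.univ.filter (fun j => 0 ≤ M i j) with hN0def
  have hN0mem : ∀ i j, j ∈ N0 i ↔ b j ≤ a i := by
    intro i j
    simp only [hN0def, Finset.mem_filter, Finset.mem_univ, true_and, hmem]
  -- each N0 i is an up-set
  have hup : ∀ i {j k : Fin ℓ}, j ≤ k → j ∈ N0 i → k ∈ N0 i := by
    intro i j k hjk hj
    rw [hN0mem] at *
    rcases lt_or_eq_of_le hjk with h | h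
    · exact le_trans (hbs h).le hj
    · exact h ▸ hj
  -- the N0's are totally ordered by inclusion
  have htot : ∀ i i', N0 i ⊆ N0 i' ∨ N0 i' ⊆ N0 i := by
    intro i i'
    by_contra hcon
    push_neg at hcon
    obtain ⟨⟨j, hj, hj'⟩, ⟨k, hk, hk'⟩⟩ :
        (∃ j, j ∈ N0 i ∧ j ∉ N0 i') ∧ (∃ k, k ∈ N0 i' ∧ k ∉ N0 i) := by
      constructor
      · rcases Finset.not_subset.mp hcon.1 with ⟨j, hj, hj'⟩; exact ⟨j, hj, hj'⟩
      · rcases Finset.not_subset.mp hcon.2 with ⟨k, hk, hk'⟩; exact ⟨k, hk, hk'⟩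
    rw [hN0mem] at hj hk
    rw [hN0mem] at hj' hk'
    push_neg at hj' hk'
    -- b j ≤ a i < b k and b k ≤ a i' < b j
    have : b j < b j := lt_of_lt_of_le (lt_of_le_of_lt hj hk') (le_trans hk hj'.le)
    exact absurd this (lt_irrefl _)
  -- for a zero row, N0 is the up-set generated by its zero column
  have hN0z : ∀ r, Zr r → ∀ j, j ∈ N0 r ↔ z r ≤ j := by
    intro r hr j
    rw [hN0mem, ← hzab r hr]
    constructor
    · intro h
      by_contra hlt
      push_neg at hlt
      exact absurd (hbs hlt) (not_lt.mpr h)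
    · intro h
      rcases lt_or_eq_of_le h with h | h
      · exact (hbs h).le
      · exact h ▸ le_refl _
  -- zero columns
  set C : Finset (Fin ℓ) :=
    Finset.univ.filter (fun j => ∃ r, M r j = 0) with hCdef
  have hzC : ∀ r, Zr r → z r ∈ C := by
    intro r hr
    simp only [hCdef, Finset.mem_filter, Finset.mem_univ, true_and]
    exact ⟨r, hz r hr⟩
  -- neighborhoods
  set N : Fin ℓ → Finset (Fin ℓ) :=
    fun i => if Zr i then {z i} else N0 i \ C with hNdef
  -- Hall's condition
  have hall : ∀ S : Finset (Fin ℓ), S.card ≤ (S.biUnion N).card := by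
    intro S
    set S1 : Finset (Fin ℓ) := S.filter Zr with hS1def
    set S2 : Finset (Fin ℓ) := S.filter (fun i => ¬ Zr i) with hS2def
    have hcards : S1.card + S2.card = S.card := Finset.card_filter_add_card_filter_not _
    have hzinjS1 : Set.InjOn z ↑S1 := by
      intro r hr r' hr' h
      simp only [hS1def, Finset.coe_filter, Set.mem_setOf_eq] at hr hr'
      exact hzinj r r' hr.2 hr'.2 h
    have himgsub : S1.image z ⊆ S.biUnion N := by
      intro j hj
      rcases Finset.mem_image.mp hj with ⟨r, hr, rfl⟩
      have hrZ : Zr r := (Finset.mem_filter.mp hr).2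
      refine Finset.mem_biUnion.mpr ⟨r, (Finset.mem_filter.mp hr).1, ?_⟩
      simp only [hNdef, if_pos hrZ, Finset.mem_singleton]
    by_cases hS2 : S2.Nonempty
    · -- choose row with maximal N0-card in S2
      obtain ⟨i0, hi0S2, hi0max⟩ := S2.exists_max_image (fun i => (N0 i).card) hS2
      set U : Finset (Fin ℓ) := N0 i0 with hUdef
      have hi0S : i0 ∈ S := (Finset.mem_filter.mp hi0S2).1
      have hi0nZ : ¬ Zr i0 := (Finset.mem_filter.mp hi0S2).2
      -- ZU : zero rows with zero column in U
      set ZU : Finset (Fin ℓ) :=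
        Finset.univ.filter (fun r => Zr r ∧ z r ∈ U) with hZUdef
      set W : Finset (Fin ℓ) := S2 ∪ ZU with hWdef
      have hdisj : Disjoint S2 ZU := by
        rw [Finset.disjoint_left]
        intro r hr hr'
        exact (Finset.mem_filter.mp hr).2 (Finset.mem_filter.mp hr').2.1
      have hWcard : W.card = S2.card + ZU.card := Finset.card_union_of_disjoint hdisj
      obtain ⟨w, hwW, hwcard⟩ := ha W ⟨i0, Finset.mem_union_left _ hi0S2⟩
      have hwcard' : W.card ≤ (N0 w).card := hwcard
      have hNwU : N0 w ⊆ U := by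
        rcases Finset.mem_union.mp hwW with hw | hw
        · rcases htot w i0 with h | h
          · exact h
          · have : (N0 w).card ≤ (N0 i0).card := hi0max w hw
            have heq : N0 i0 = N0 w := Finset.eq_of_subset_of_card_le h this
            rw [hUdef, heq]
        · -- w ∈ ZU
          have hw' := (Finset.mem_filter.mp hw).2
          intro j hj
          have h1 : z w ≤ j := (hN0z w hw'.1 j).mp hj
          exact hup i0 h1 hw'.2
      have hWU : W.card ≤ U.card := le_trans hwcard' (Finset.card_le_card hNwU)
      -- U ∩ C ⊆ ZU.image z
      have hUC : U ∩ C ⊆ ZU.image z := by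
        intro j hj
        rcases Finset.mem_inter.mp hj with ⟨hjU, hjC⟩
        simp only [hCdef, Finset.mem_filter, Finset.mem_univ, true_and] at hjC
        rcases hjC with ⟨r, hr⟩
        have hrZ : Zr r := ⟨j, hr⟩
        have hjz : j = z r := hzuniq r j hr
        refine Finset.mem_image.mpr ⟨r, ?_, hjz.symm⟩
        simp only [hZUdef, Finset.mem_filter, Finset.mem_univ, true_and]
        exact ⟨hrZ, hjz ▸ hjU⟩
      have hUCcard : (U ∩ C).card ≤ ZU.card :=
        le_trans (Finset.card_le_card hUC) (Finset.card_image_le)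
      have hsplit : (U ∩ C).card + (U \ C).card = U.card :=
        Finset.card_inter_add_card_sdiff U C
      have hUsdC : S2.card ≤ (U \ C).card := by omega
      -- the union
      have hsub2 : U \ C ⊆ S.biUnion N := by
        intro j hj
        refine Finset.mem_biUnion.mpr ⟨i0, hi0S, ?_⟩
        simp only [hNdef, if_neg hi0nZ]
        exact hj
      have hdisj2 : Disjoint (S1.image z) (U \ C) := by
        rw [Finset.disjoint_left]
        intro j hj hj'
        rcases Finset.mem_image.mp hj with ⟨r, hr, rfl⟩
        exact (Finset.mem_sdiff.mp hj').2 (hzC r (Finset.mem_filter.mp hr).2)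
      have hbig : S1.image z ∪ (U \ C) ⊆ S.biUnion N :=
        Finset.union_subset himgsub hsub2
      have h1 : (S1.image z).card = S1.card := Finset.card_image_of_injOn hzinjS1
      have h2 : (S1.image z ∪ (U \ C)).card = (S1.image z).card + (U \ C).card :=
        Finset.card_union_of_disjoint hdisj2
      have := Finset.card_le_card hbig
      omega
    · -- S2 empty : every row in S is a zero row
      have hS1 : S1 = S := by
        rw [Finset.not_nonempty_iff_eq_empty] at hS2
        have := Finset.card_filter_add_card_filter_not (s := S) (p := Zr)
        rw [hS1def]
        apply Finset.eq_of_subset_of_card_le (Finset.filter_subset _ _)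
        rw [hS2def] at hS2
        have h0 : (S.filter (fun i => ¬ Zr i)).card = 0 := by rw [hS2]; simp
        omega
      have h1 : (S1.image z).card = S1.card := Finset.card_image_of_injOn hzinjS1
      have h2 : S1.card = S.card := by rw [hS1]
      have := Finset.card_le_card himgsub
      omega
  -- apply Hall's theorem
  obtain ⟨f, hfinj, hfN⟩ := (Finset.all_card_le_biUnion_card_iff_exists_injective N).mp hall
  have hfbij : Function.Bijective f := Finite.injective_iff_bijective.mp hfinj
  refine ⟨Equiv.ofBijective f hfbij, ?_, ?_⟩
  · intro i
    have := hfN i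
    simp only [Equiv.ofBijective_apply]
    by_cases hi : Zr i
    · simp only [hNdef, if_pos hi, Finset.mem_singleton] at this
      rw [this]
      exact (hz i hi).ge
    · simp only [hNdef, if_neg hi, Finset.mem_sdiff, hN0def, Finset.mem_filter] at this
      exact this.1.2
  · intro r t hrt
    have hrZ : Zr r := ⟨t, hrt⟩
    have := hfN r
    simp only [hNdef, if_pos hrZ, Finset.mem_singleton] at this
    simp only [Equiv.ofBijective_apply, this]
    exact (hzuniq r t hrt).symm
end
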